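/- For every positive integer n, 2n/3 < V(n) < (2n+2)/3. -/
import Mathlib


open Finset

/-- The largest odd divisor of `k`. -/
def oddPart (k : ℕ) : ℕ := ordCompl[2] k

/-- `V n = ∑_{k=1}^n α(k)/k` as a rational number. -/
def V (n : ℕ) : ℚ := ∑ k ∈ Finset.Icc 1 n, (oddPart k : ℚ) / k

/-- `v n = V n - 2n/3`. -/
def v (n : ℕ) : ℚ := V n - 2 * n / 3

/-- `U n = ∑_{k=1}^n α(k)`. -/
def U (n : ℕ) : ℕ := ∑ k ∈ Finset.Icc 1 n, oddPart k

/-- `G n = ∑_{k=1}^n (n+1-k)·α(k)/k` as a rational number. -/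
def G (n : ℕ) : ℚ := ∑ k ∈ Finset.Icc 1 n, ((n : ℚ) + 1 - k) * (oddPart k : ℚ) / k

/-- `g n = n(n+2)/3 - G n`. -/
def g (n : ℕ) : ℚ := n * (n + 2) / 3 - G n

lemma oddPart_two_mul (k : ℕ) : oddPart (2 * k) = oddPart k := by
  rcases Nat.eq_zero_or_pos k with rfl | hk
  · simp [oddPart]
  · unfold oddPart
    rw [Nat.ordCompl_mul]
    norm_num

lemma oddPart_odd {k : ℕ} (h : Odd k) : oddPart k = k := by
  unfold oddPart
  rw [Nat.factorization_eq_zero_of_not_dvd (by simpa using h.not_two_dvd_nat)]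
  simp

lemma V_succ (n : ℕ) : V (n+1) = V n + (oddPart (n+1) : ℚ) / (n+1) := by
  unfold V
  rw [Finset.sum_Icc_succ_top (by omega)]
  push_cast; ring_nf

lemma V_rec (m : ℕ) : V (2*m) = m + V m / 2 ∧ V (2*m+1) = (m+1) + V m / 2 := by
  induction m with
  | zero =>
    constructor
    · simp [V]
    · have : oddPart 1 = 1 := oddPart_odd (by norm_num)
      simp [V, this]
  | succ m ih =>
    have h1 := V_succ (2*m+1)
    rw [show 2*m+1+1 = 2*(m+1) by ring] at h1
    have h2 := V_succ (2*(m+1))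
    have ho : oddPart (2*(m+1)) = oddPart (m+1) := oddPart_two_mul (m+1)
    have hodd : oddPart (2*(m+1)+1) = 2*(m+1)+1 := oddPart_odd ⟨m+1, by ring⟩
    have hVm : V (m+1) = V m + (oddPart (m+1) : ℚ) / (m+1) := V_succ m
    have hm1 : ((m:ℚ)+1) ≠ 0 := by positivity
    constructor
    · rw [h1, ih.2, ho, hVm]; push_cast; field_simp; ring
    · rw [h2, h1, ih.2, ho, hVm, hodd]; push_cast; field_simp; ring

lemma v_bounds (n : ℕ) (hn : 0 < n) : 0 < V n - 2*n/3 ∧ V n - 2*n/3 < 2/3 := by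
  induction n using Nat.strong_induction_on with
  | _ n ih =>
    rcases Nat.even_or_odd n with ⟨m, hm⟩ | ⟨m, hm⟩
    · have hm1 : 0 < m := by omega
      have h := (V_rec m).1
      have ihm := ih m (by omega) hm1
      subst hm
      rw [show m + m = 2*m by ring] at *
      rw [h]
      push_cast
      constructor <;> nlinarith [ihm.1, ihm.2]
    · rcases Nat.eq_zero_or_pos m with rfl | hm1
      · subst hm
        have h : V (2*0+1) = 1 := by rw [(V_rec 0).2]; simp [V]
        rw [h]; norm_num
      · have h := (V_rec m).2
        have ihm := ih m (by omega) hm1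
        subst hm
        rw [h]
        push_cast
        constructor <;> nlinarith [ihm.1, ihm.2]

theorem stmt1 (n : ℕ) (hn : 0 < n) :
    (2 * n : ℚ) / 3 < V n ∧ V n < (2 * n + 2) / 3 := by
  have h := v_bounds n hn
  constructor <;> linarith [h.1, h.2]
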